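/- arXiv:2104.08803 — 5 statements merged into one kernel-verified Lean document; each statement's English description precedes it below -/
import Mathlib

section
/- Let V_1, …, V_{n+1} be exchangeable real-valued random variables on a common probability space, and let α ∈ (0,1). Then P( V_{n+1} ≤ Quantile(α; {V_1, …, V_n} ∪ {+∞}) ) ≥ α, where the quantile is taken of the inflated empirical sample of size n+1 consisting of the n calibration values together with the point +∞. -/
open MeasureTheory ProbabilityTheory

/-- The empirical `α`-quantile of a finite multiset `S` of values in `ℝ ∪ {+∞}`:
the `⌈α · |S|⌉`-th smallest element of `S`, counted with multiplicity. -/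
noncomputable def empQuantile (α : ℝ) (S : Multiset (WithTop ℝ)) : WithTop ℝ :=
  (S.sort (· ≤ ·)).getD (⌈α * (S.card : ℝ)⌉.toNat - 1) ⊤

/-- Random variables `Z 0, …, Z (m-1)` are exchangeable if their joint distribution is
invariant under every permutation of the indices. -/
def Exchangeable {Ω α : Type*} [MeasurableSpace Ω] [MeasurableSpace α]
    (P : Measure Ω) {m : ℕ} (Z : Fin m → Ω → α) : Prop :=
  ∀ σ : Equiv.Perm (Fin m),
    Measure.map (fun ω i => Z (σ i) ω) P = Measure.map (fun ω i => Z i ω) P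

/-!
Put `k = ⌈α (n + 1)⌉`. The test value `V_{n+1}` lies below the inflated quantile exactly when
fewer than `k` of the values `V_1, …, V_{n+1}` lie strictly below it. In every sample at least `k`
of the `n + 1` values have fewer than `k` values strictly below them, so the probabilities of
these `n + 1` events sum to at least `k`; by exchangeability they are all equal, hence each is
at least `k / (n + 1) ≥ α`.
-/

open Finset
open scoped ENNReal

theorem List.SortedLE.le_getElem_iff_countP_lt_le {β : Type*} [LinearOrder β] {L : List β}
    (hL : L.SortedLE) (v : β) {j : ℕ} (hj : j < L.length) :
    v ≤ L[j] ↔ L.countP (· < v) ≤ j := by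
  constructor
  · intro hv
    have hdrop : (L.drop j).countP (· < v) = 0 := by
      refine List.countP_eq_zero.2 fun a ha => ?_
      obtain ⟨i, hi, rfl⟩ := List.mem_drop_iff_getElem.1 ha
      simpa using hv.trans (hL.getElem_le_getElem_of_le (Nat.le_add_right j i))
    calc L.countP (· < v) = (L.take j).countP (· < v) + (L.drop j).countP (· < v) := by
          rw [← List.countP_append, List.take_append_drop]
      _ ≤ j := by
          rw [hdrop, add_zero]
          exact List.countP_le_length.trans (List.length_take_le j L)
  · intro hcount
    by_contra! hlt
    have htake : (L.take (j + 1)).countP (· < v) = j + 1 := by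
      refine (List.countP_eq_length.2 fun a ha => ?_).trans (by rw [List.length_take]; omega)
      obtain ⟨i, hi, rfl⟩ := List.mem_take_iff_getElem.1 ha
      simpa using (hL.getElem_le_getElem_of_le (by omega : i ≤ j)).trans_lt hlt
    have := (L.take_sublist (j + 1)).countP_le (p := (· < v))
    omega

theorem le_empQuantile_iff {α : ℝ} (hα₀ : 0 < α) (hα₁ : α ≤ 1) {S : Multiset (WithTop ℝ)}
    (hS : S ≠ 0) (v : WithTop ℝ) :
    v ≤ empQuantile α S ↔ S.countP (· < v) < ⌈α * S.card⌉₊ := by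
  set L := S.sort (· ≤ ·)
  have hcard : 0 < S.card := Multiset.card_pos.2 hS
  have hk₀ : 0 < ⌈α * S.card⌉₊ := Nat.ceil_pos.2 (by positivity)
  have hk₁ : ⌈α * S.card⌉₊ ≤ S.card := Nat.ceil_le.2 (mul_le_of_le_one_left (by positivity) hα₁)
  have hlen : ⌈α * S.card⌉₊ - 1 < L.length := by
    rw [Multiset.length_sort]; omega
  have hsorted : L.SortedLE := List.sortedLE_iff_pairwise.2 (Multiset.pairwise_sort _ _)
  have hcountP : S.countP (· < v) = L.countP (· < v) := by
    conv_lhs => rw [← Multiset.sort_eq S (· ≤ ·)]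
    exact Multiset.coe_countP _ _
  rw [empQuantile, Int.ceil_toNat, List.getD_eq_getElem _ _ hlen,
    hsorted.le_getElem_iff_countP_lt_le v hlen, hcountP]
  omega

section StrictRank

variable {ι β : Type*} [Fintype ι] [LinearOrder β]

def strictRank (x : ι → β) (i : ι) : ℕ := #{j | x j < x i}

theorem strictRank_comp_perm (x : ι → β) (σ : Equiv.Perm ι) (i : ι) :
    strictRank (x ∘ σ) i = strictRank x (σ i) := by
  simp only [strictRank, card_filter, Function.comp_apply]
  exact Equiv.sum_comp σ fun j => if x j < x (σ i) then 1 else 0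

theorem le_card_filter_strictRank_lt (x : ι → β) {k : ℕ} (hk : k ≤ Fintype.card ι) :
    k ≤ #{i | strictRank x i < k} := by
  by_cases hhigh : ({i | k ≤ strictRank x i} : Finset ι).Nonempty
  -- a coordinate of least value among those of rank `≥ k` has only ranks `< k` strictly below it
  · obtain ⟨i₀, hi₀, hmin⟩ := exists_min_image _ x hhigh
    calc k ≤ strictRank x i₀ := (mem_filter.1 hi₀).2
      _ ≤ #{i | strictRank x i < k} := by
          refine card_le_card fun j hj => mem_filter.2 ⟨mem_univ j, ?_⟩
          by_contra! hjhigh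
          exact (hmin j (mem_filter.2 ⟨mem_univ j, hjhigh⟩)).not_gt (mem_filter.1 hj).2
  · rw [not_nonempty_iff_eq_empty, filter_eq_empty_iff] at hhigh
    simpa [filter_true_of_mem fun i _ => not_le.1 (hhigh (mem_univ i))] using hk

variable [MeasurableSpace β] [TopologicalSpace β] [OpensMeasurableSpace β]
  [OrderClosedTopology β] [SecondCountableTopology β]

theorem measurable_strictRank (i : ι) : Measurable fun x : ι → β => strictRank x i := by
  simp only [strictRank, card_filter]
  exact Finset.measurable_sum _ fun j _ =>
    Measurable.ite (measurableSet_lt (measurable_pi_apply j) (measurable_pi_apply i))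
      measurable_const measurable_const

end StrictRank

theorem natCast_le_sum_measure_of_le_card {Ω ι : Type*} [MeasurableSpace Ω] [Fintype ι]
    (μ : Measure Ω) [IsProbabilityMeasure μ] {E : ι → Set Ω} [∀ i, DecidablePred (· ∈ E i)]
    (hE : ∀ i, MeasurableSet (E i)) {k : ℕ} (hk : ∀ ω, k ≤ #{i | ω ∈ E i}) :
    (k : ℝ≥0∞) ≤ ∑ i, μ (E i) := by
  calc (k : ℝ≥0∞) = ∫⁻ _, (k : ℝ≥0∞) ∂μ := by simp
    _ ≤ ∫⁻ ω, ∑ i, (E i).indicator 1 ω ∂μ := lintegral_mono fun ω => by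
        simpa [Set.indicator_apply, sum_boole] using hk ω
    _ = ∑ i, μ (E i) := by
        rw [lintegral_finsetSum _ fun i _ => measurable_one.indicator (hE i)]
        simp [lintegral_indicator_one (hE _)]

namespace Exchangeable

variable {Ω β : Type*} [MeasurableSpace Ω] [MeasurableSpace β] {P : Measure Ω} {m : ℕ}
  {Z : Fin m → Ω → β}

theorem measure_preimage_comp_perm (hZ : Exchangeable P Z) (hmeas : ∀ i, Measurable (Z i))
    (σ : Equiv.Perm (Fin m)) {A : Set (Fin m → β)} (hA : MeasurableSet A) :
    P {ω | (fun i => Z (σ i) ω) ∈ A} = P {ω | (fun i => Z i ω) ∈ A} := by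
  have := congrArg (· A) (hZ σ)
  rwa [Measure.map_apply (measurable_pi_lambda _ fun i => hmeas (σ i)) hA,
    Measure.map_apply (measurable_pi_lambda _ hmeas) hA] at this

variable [LinearOrder β] [TopologicalSpace β] [OpensMeasurableSpace β]
  [OrderClosedTopology β] [SecondCountableTopology β]

theorem measure_strictRank_lt_eq (hZ : Exchangeable P Z) (hmeas : ∀ i, Measurable (Z i))
    (k : ℕ) (i j : Fin m) :
    P {ω | strictRank (fun l => Z l ω) i < k} = P {ω | strictRank (fun l => Z l ω) j < k} := by
  have hA : MeasurableSet {x : Fin m → β | strictRank x j < k} :=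
    measurable_strictRank j measurableSet_Iio
  have hswap (ω : Ω) :
      strictRank (fun l => Z (Equiv.swap i j l) ω) j = strictRank (fun l => Z l ω) i :=
    (strictRank_comp_perm (fun l => Z l ω) (Equiv.swap i j) j).trans
      (by rw [Equiv.swap_apply_right])
  simpa only [Set.mem_ofPred_eq, hswap] using
    hZ.measure_preimage_comp_perm hmeas (Equiv.swap i j) hA

theorem natCast_le_mul_measure_strictRank_lt [IsProbabilityMeasure P] (hZ : Exchangeable P Z)
    (hmeas : ∀ i, Measurable (Z i)) {k : ℕ} (hk : k ≤ m) (i : Fin m) :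
    (k : ℝ≥0∞) ≤ m * P {ω | strictRank (fun l => Z l ω) i < k} := by
  have hE (j : Fin m) : MeasurableSet {ω | strictRank (fun l => Z l ω) j < k} :=
    (measurable_strictRank j).comp (measurable_pi_lambda _ hmeas) measurableSet_Iio
  calc (k : ℝ≥0∞) ≤ ∑ j, P {ω | strictRank (fun l => Z l ω) j < k} :=
        natCast_le_sum_measure_of_le_card P hE fun ω =>
          le_card_filter_strictRank_lt _ (by simpa using hk)
    _ = m * P {ω | strictRank (fun l => Z l ω) i < k} := by
        simp [hZ.measure_strictRank_lt_eq hmeas k _ i]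

end Exchangeable

theorem strictRank_last_eq_countP {β : Type*} [LinearOrder β] {n : ℕ} (x : Fin (n + 1) → β) :
    strictRank x (Fin.last n) = ((⊤ : WithTop β) ::ₘ
      (Finset.univ : Finset (Fin n)).val.map fun i => (x i.castSucc : WithTop β)).countP
        (· < (x (Fin.last n) : WithTop β)) := by
  rw [Multiset.countP_cons, Multiset.countP_map]
  simp only [not_top_lt, if_false, add_zero, WithTop.coe_lt_coe]
  rw [strictRank, card_filter, Fin.sum_univ_castSucc, if_neg (lt_irrefl _), add_zero,
    ← card_filter]
  rfl

theorem ENNReal.ofReal_le_natCeil_mul_div (α : ℝ) {m : ℕ} (hm : m ≠ 0) :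
    ENNReal.ofReal α ≤ ⌈α * m⌉₊ / m := by
  rw [ENNReal.le_div_iff_mul_le (Or.inl (Nat.cast_ne_zero.2 hm))
    (Or.inl (ENNReal.natCast_ne_top m))]
  calc ENNReal.ofReal α * m = ENNReal.ofReal (α * m) := by
        rw [ENNReal.ofReal_mul' m.cast_nonneg, ENNReal.ofReal_natCast]
    _ ≤ ⌈α * m⌉₊ := ENNReal.ofReal_le_of_le_toReal (by simpa using Nat.le_ceil (α * m))

/-- If `V 0, …, V n` are exchangeable real random variables and `α ∈ (0,1)`, then
`P(V_{n+1} ≤ Quantile(α; {V_1, …, V_n} ∪ {+∞})) ≥ α`. -/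
theorem conformal_quantile_coverage
    {Ω : Type*} [MeasurableSpace Ω] (P : Measure Ω) [IsProbabilityMeasure P]
    {n : ℕ} (V : Fin (n + 1) → Ω → ℝ) (hVmeas : ∀ i, Measurable (V i))
    (hexch : Exchangeable P V)
    (α : ℝ) (hα : α ∈ Set.Ioo (0 : ℝ) 1) :
    ENNReal.ofReal α ≤
      P {ω | ((V (Fin.last n) ω : ℝ) : WithTop ℝ) ≤
        empQuantile α
          ((⊤ : WithTop ℝ) ::ₘ
            ((Finset.univ : Finset (Fin n)).val.map
              fun i => ((V i.castSucc ω : ℝ) : WithTop ℝ)))} := by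
  obtain ⟨hα₀, hα₁⟩ := hα
  set k := ⌈α * ((n + 1 : ℕ) : ℝ)⌉₊
  have hk : k ≤ n + 1 := Nat.ceil_le.2 (mul_le_of_le_one_left (by positivity) hα₁.le)
  calc ENNReal.ofReal α ≤ k / (n + 1 : ℕ) := ENNReal.ofReal_le_natCeil_mul_div α n.succ_ne_zero
    _ ≤ P {ω | strictRank (fun j => V j ω) (Fin.last n) < k} :=
        ENNReal.div_le_of_le_mul' (hexch.natCast_le_mul_measure_strictRank_lt hVmeas hk _)
    _ = _ := congrArg P <| Set.ext fun ω => by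
        rw [Set.mem_ofPred_eq, Set.mem_ofPred_eq, le_empQuantile_iff hα₀ hα₁.le
          Multiset.cons_ne_zero, ← strictRank_last_eq_countP (fun j => V j ω), Multiset.card_cons,
          Multiset.card_map, card_val, card_univ, Fintype.card_fin]
end

section
/- For any real numbers v_1, …, v_{n+1} and any α ∈ (0,1): v_{n+1} ≤ Quantile(α; {v_1, …, v_n} ∪ {+∞}) if and only if v_{n+1} ≤ Quantile(α; {v_1, …, v_{n+1}}). That is, replacing the (n+1)-st sample value by +∞ does not change whether the (n+1)-st value lies below the α-quantile of the size-(n+1) sample. -/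
open MeasureTheory

/-!
Read with default `⊤`, the `k`-th entry (from `0`) of a sorted list is at least `x` exactly when
at most `k` entries lie strictly below `x`. Hence whether `x` lies below an order statistic
depends only on the sample size and on the number of sample points below `x`, and replacing
the point `x` itself by `+∞` changes neither.
-/

section OrderStatistic

variable {α : Type*} [LinearOrder α] [OrderTop α]

theorem List.le_getD_top_iff_countP_lt_le {l : List α} (hl : l.Pairwise (· ≤ ·)) (x : α)
    (k : ℕ) : x ≤ l.getD k ⊤ ↔ l.countP (· < x) ≤ k := by
  induction l generalizing k with
  | nil => simp
  | cons a t ih =>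
    rw [List.pairwise_cons] at hl
    by_cases hax : a < x
    · rw [List.countP_cons_of_pos (by simpa using hax)]
      cases k with
      | zero => simpa using hax
      | succ k => rw [List.getD_cons_succ, ih hl.2]; omega
    · have ht : t.countP (· < x) = 0 :=
        List.countP_eq_zero.mpr fun b hb => by
          simpa using (not_lt.mp hax).trans (hl.1 b hb)
      rw [List.countP_cons_of_neg (by simpa using hax), ht]
      cases k with
      | zero => simpa using hax
      | succ k => simp only [List.getD_cons_succ, ih hl.2, ht, zero_le]

theorem Multiset.le_sort_getD_top_iff_countP_lt_le (S : Multiset α) (x : α) (k : ℕ) :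
    x ≤ (S.sort (· ≤ ·)).getD k ⊤ ↔ S.countP (· < x) ≤ k := by
  rw [List.le_getD_top_iff_countP_lt_le (S.pairwise_sort _), ← Multiset.coe_countP,
    S.sort_eq]

end OrderStatistic

theorem Fin.univ_val_map_eq_cons_last {β : Type*} {n : ℕ} (f : Fin (n + 1) → β) :
    (Finset.univ : Finset (Fin (n + 1))).val.map f =
      f (Fin.last n) ::ₘ (Finset.univ : Finset (Fin n)).val.map (fun i => f i.castSucc) := by
  rw [Fin.univ_val_map, Fin.univ_val_map, List.ofFn_succ', List.concat_eq_append,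
    ← Multiset.coe_add, Multiset.coe_singleton, add_comm, Multiset.singleton_add]

theorem quantile_inflate_last_iff_general
    {n : ℕ} (v : Fin (n + 1) → ℝ) (α : ℝ) :
    (((v (Fin.last n) : ℝ) : WithTop ℝ) ≤
        empQuantile α
          ((⊤ : WithTop ℝ) ::ₘ
            ((Finset.univ : Finset (Fin n)).val.map
              fun i => ((v i.castSucc : ℝ) : WithTop ℝ)))) ↔
      (((v (Fin.last n) : ℝ) : WithTop ℝ) ≤
        empQuantile α
          ((Finset.univ : Finset (Fin (n + 1))).val.map
            fun i => ((v i : ℝ) : WithTop ℝ))) := by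
  rw [Fin.univ_val_map_eq_cons_last]
  simp only [empQuantile, Multiset.le_sort_getD_top_iff_countP_lt_le, Multiset.card_cons,
    Multiset.countP_cons, not_top_lt, lt_irrefl, if_false]

/-- For reals `v 0, …, v n` and `α ∈ (0,1)`:
`v_{n+1} ≤ Quantile(α; {v_1,…,v_n} ∪ {+∞})` iff `v_{n+1} ≤ Quantile(α; {v_1,…,v_{n+1}})`. -/
theorem quantile_inflate_last_iff
    {n : ℕ} (v : Fin (n + 1) → ℝ) (α : ℝ) (hα : α ∈ Set.Ioo (0 : ℝ) 1) :
    (((v (Fin.last n) : ℝ) : WithTop ℝ) ≤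
        empQuantile α
          ((⊤ : WithTop ℝ) ::ₘ
            ((Finset.univ : Finset (Fin n)).val.map
              fun i => ((v i.castSucc : ℝ) : WithTop ℝ)))) ↔
      (((v (Fin.last n) : ℝ) : WithTop ℝ) ≤
        empQuantile α
          ((Finset.univ : Finset (Fin (n + 1))).val.map
            fun i => ((v i : ℝ) : WithTop ℝ))) :=
  quantile_inflate_last_iff_general v α
end

section
/- Let v_1, …, v_n be real numbers, α ∈ (0,1), and q = Quantile(α; {v_1, …, v_n}). If w_1, …, w_n ∈ ℝ ∪ {+∞} satisfy w_i = v_i for every index i with v_i ≤ q, and w_i > q for every index i with v_i > q, then Quantile(α; {w_1, …, w_n}) = q. In words, the α-quantile of a finite sample is unchanged when all sample points strictly above the quantile are remapped to arbitrary values strictly above it. -/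
/-! In a sorted list, the entry at (0-based) position `k` equals `q` exactly when at most `k`
entries are `< q` and more than `k` entries are `≤ q`. Remapping the points above the quantile
preserves, point by point, both `· < q` and `· ≤ q`, hence both counts and the sample size, so the
entry at the quantile's position is still `q`. -/

open MeasureTheory

theorem List.Pairwise.lt_countP_iff {β : Type*} {r : β → β → Prop} {p : β → Bool}
    {L : List β} (hL : L.Pairwise r) (hp : ∀ x y, r x y → p y → p x)
    {k : ℕ} (hk : k < L.length) :
    k < L.countP p ↔ p L[k] := by
  induction L generalizing k with
  | nil => simp at hk
  | cons a l ih =>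
    obtain ⟨ha, hl⟩ := List.pairwise_cons.mp hL
    by_cases hpa : p a
    · rcases k with _ | k
      · simp [hpa]
      · simpa [List.countP_cons, hpa] using ih hl (by simpa using hk)
    · have hnone : ∀ b ∈ a :: l, ¬ p b := by
        rintro b (_ | ⟨_, hb⟩)
        · exact hpa
        · exact fun hpb => hpa (hp a b (ha b hb) hpb)
      simp [List.countP_eq_zero.mpr hnone, hnone _ (List.getElem_mem hk)]

section SortedMultiset

variable {β : Type*} [LinearOrder β]

theorem Multiset.sort_getElem_eq_iff (S : Multiset β) {k : ℕ}
    (hk : k < (S.sort (· ≤ ·)).length) (q : β) :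
    (S.sort (· ≤ ·))[k] = q ↔ S.countP (· < q) ≤ k ∧ k < S.countP (· ≤ q) := by
  have hsorted := S.pairwise_sort (· ≤ ·)
  have hcountP (p : β → Prop) [DecidablePred p] : S.countP p = (S.sort (· ≤ ·)).countP p := by
    rw [← Multiset.coe_countP, Multiset.sort_eq]
  have hle := hsorted.lt_countP_iff (p := fun x => decide (x ≤ q))
    (fun x y hxy hy => by simpa using hxy.trans (by simpa using hy)) hk
  have hlt := hsorted.lt_countP_iff (p := fun x => decide (x < q))
    (fun x y hxy hy => by simpa using hxy.trans_lt (by simpa using hy)) hk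
  simp only [decide_eq_true_eq] at hle hlt
  rw [hcountP, hcountP, ← not_lt, hle, hlt, not_lt, le_antisymm_iff, and_comm]

theorem Multiset.sort_getD_eq_of_countP_eq {S T : Multiset β} {q d : β} {k : ℕ}
    (hcard : S.card = T.card) (hlt : S.countP (· < q) = T.countP (· < q))
    (hle : S.countP (· ≤ q) = T.countP (· ≤ q)) (hS : (S.sort (· ≤ ·)).getD k d = q) :
    (T.sort (· ≤ ·)).getD k d = q := by
  by_cases hk : k < S.card
  · have hkS : k < (S.sort (· ≤ ·)).length := by rwa [Multiset.length_sort]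
    have hkT : k < (T.sort (· ≤ ·)).length := by rwa [Multiset.length_sort, ← hcard]
    rw [List.getD_eq_getElem _ _ hkS, S.sort_getElem_eq_iff hkS, hlt, hle] at hS
    rwa [List.getD_eq_getElem _ _ hkT, T.sort_getElem_eq_iff hkT]
  · rw [List.getD_eq_default _ _ (by simpa using hk)] at hS
    rwa [List.getD_eq_default _ _ (by simpa [← hcard] using hk)]

end SortedMultiset

theorem empQuantile_eq_of_countP_eq {S T : Multiset (WithTop ℝ)} {q : WithTop ℝ} (α : ℝ)
    (hcard : S.card = T.card) (hlt : S.countP (· < q) = T.countP (· < q))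
    (hle : S.countP (· ≤ q) = T.countP (· ≤ q)) (hS : empQuantile α S = q) :
    empQuantile α T = q := by
  unfold empQuantile at hS ⊢
  rw [← hcard]
  exact Multiset.sort_getD_eq_of_countP_eq hcard hlt hle hS

theorem Multiset.countP_map_eq_of_iff {ι β : Type*} {p : β → Prop} [DecidablePred p]
    {f g : ι → β} (s : Multiset ι) (hfg : ∀ i ∈ s, p (f i) ↔ p (g i)) :
    (s.map f).countP p = (s.map g).countP p := by
  rw [Multiset.countP_map, Multiset.countP_map, Multiset.filter_congr hfg]

theorem quantile_remap_above_general
    {n : ℕ} (v : Fin n → ℝ) (w : Fin n → WithTop ℝ)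
    (α : ℝ)
    (q : WithTop ℝ)
    (hq : q = empQuantile α
      ((Finset.univ : Finset (Fin n)).val.map fun i => ((v i : ℝ) : WithTop ℝ)))
    (hle : ∀ i, ((v i : ℝ) : WithTop ℝ) ≤ q → w i = ((v i : ℝ) : WithTop ℝ))
    (hgt : ∀ i, q < ((v i : ℝ) : WithTop ℝ) → q < w i) :
    empQuantile α ((Finset.univ : Finset (Fin n)).val.map w) = q := by
  have hsame_side (i : Fin n) :
      (w i ≤ q ↔ (v i : WithTop ℝ) ≤ q) ∧ (w i < q ↔ (v i : WithTop ℝ) < q) := by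
    rcases le_or_gt (v i : WithTop ℝ) q with hvq | hqv
    · simp [hle i hvq]
    · have hqw := hgt i hqv
      simp [hqv.not_ge, hqw.not_ge, hqv.not_gt, hqw.not_gt]
  refine empQuantile_eq_of_countP_eq α (by simp) ?_ ?_ hq.symm
  · exact Multiset.countP_map_eq_of_iff _ fun i _ => (hsame_side i).2.symm
  · exact Multiset.countP_map_eq_of_iff _ fun i _ => (hsame_side i).1.symm

/-- The `α`-quantile of a finite sample of reals is unchanged when every sample point
strictly above the quantile is remapped to an arbitrary value (in `ℝ ∪ {+∞}`) strictly
above it. -/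
theorem quantile_remap_above
    {n : ℕ} (v : Fin n → ℝ) (w : Fin n → WithTop ℝ)
    (α : ℝ) (hα : α ∈ Set.Ioo (0 : ℝ) 1)
    (q : WithTop ℝ)
    (hq : q = empQuantile α
      ((Finset.univ : Finset (Fin n)).val.map fun i => ((v i : ℝ) : WithTop ℝ)))
    (hle : ∀ i, ((v i : ℝ) : WithTop ℝ) ≤ q → w i = ((v i : ℝ) : WithTop ℝ))
    (hgt : ∀ i, q < ((v i : ℝ) : WithTop ℝ) → q < w i) :
    empQuantile α ((Finset.univ : Finset (Fin n)).val.map w) = q :=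
  quantile_remap_above_general v w α q hq hle hgt
end

section
/- Let V_1, …, V_m be exchangeable real-valued random variables and let k ∈ {1, …, m}. Then P( V_m ≤ the k-th smallest value among V_1, …, V_m ) ≥ k/m. -/
/-!
Transposing `i` with the last index preserves the joint law and the order statistic, so all the
events `A i = {V i ≤ orderStat k V}` have the same probability. Every outcome lies in at least `k`
of them (those of the `k` smallest entries), hence `k ≤ ∑ i, P (A i) = m * P (A last)`.
-/

open MeasureTheory ProbabilityTheory

/-- The `k`-th smallest value (`1`-indexed order statistic, counted with multiplicity)
of a finite family of reals. -/
noncomputable def orderStat {m : ℕ} (k : ℕ) (v : Fin m → ℝ) : ℝ :=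
  (((Finset.univ : Finset (Fin m)).val.map v).sort (· ≤ ·)).getD (k - 1) 0

open Finset ENNReal

theorem Monotone.mem_iff_lt_card_filter {α : Type*} [Preorder α] {m : ℕ} {w : Fin m → α}
    (hw : Monotone w) {D : Set α} (hD : IsLowerSet D) [DecidablePred (· ∈ D)] (a : Fin m) :
    w a ∈ D ↔ (a : ℕ) < #{j | w j ∈ D} := by
  constructor
  · intro ha
    calc (a : ℕ) < #(Iic a) := by simp
      _ ≤ #{j | w j ∈ D} := card_le_card fun j hj => by
        simpa using hD (hw (mem_Iic.1 hj)) ha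
  · intro hcard
    by_contra ha
    have hsub : ({j | w j ∈ D} : Finset (Fin m)) ⊆ Iio a := fun j hj => by
      simp only [mem_filter, mem_univ, true_and] at hj
      exact mem_Iio.2 (lt_of_not_ge fun hle => ha (hD (hw hle) hj))
    exact absurd (card_le_card hsub) (by simpa using hcard)

section OrderStat

variable {m k : ℕ}

theorem orderStat_comp_perm (v : Fin m → ℝ) (σ : Equiv.Perm (Fin m)) :
    orderStat k (v ∘ σ) = orderStat k v := by
  rw [orderStat, orderStat, ← Multiset.map_map, Multiset.map_univ_val_equiv]

theorem sort_map_univ_eq_ofFn (v : Fin m → ℝ) :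
    ((univ : Finset (Fin m)).val.map v).sort (· ≤ ·) = List.ofFn (v ∘ Tuple.sort v) := by
  refine List.Perm.eq_of_pairwise' (Multiset.pairwise_sort _ _)
    (List.sortedLE_ofFn_iff.2 (Tuple.monotone_sort v)).pairwise ?_
  rw [← Multiset.coe_eq_coe, Multiset.sort_eq, ← Fin.univ_val_map, ← Multiset.map_map,
    Multiset.map_univ_val_equiv]

theorem orderStat_eq_apply_sort (hk1 : 1 ≤ k) (hkm : k ≤ m) (v : Fin m → ℝ) :
    orderStat k v = v (Tuple.sort v ⟨k - 1, by omega⟩) := by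
  rw [orderStat, sort_map_univ_eq_ofFn, List.getD_eq_getElem _ _ (by simp; omega)]
  simp

theorem orderStat_mem_iff_le_card (hk1 : 1 ≤ k) (hkm : k ≤ m) (v : Fin m → ℝ)
    {D : Set ℝ} (hD : IsLowerSet D) [DecidablePred (· ∈ D)] :
    orderStat k v ∈ D ↔ k ≤ #{j | v j ∈ D} := by
  have hcard : #{j | (v ∘ Tuple.sort v) j ∈ D} = #{j | v j ∈ D} :=
    card_equiv (Tuple.sort v) (by simp)
  rw [orderStat_eq_apply_sort hk1 hkm, ← Function.comp_apply (f := v),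
    (Tuple.monotone_sort v).mem_iff_lt_card_filter hD, hcard, Fin.val_mk]
  omega

theorem orderStat_le_iff (hk1 : 1 ≤ k) (hkm : k ≤ m) (v : Fin m → ℝ) (t : ℝ) :
    orderStat k v ≤ t ↔ k ≤ #{j | v j ≤ t} :=
  orderStat_mem_iff_le_card hk1 hkm v (isLowerSet_Iic t)

theorem orderStat_lt_iff (hk1 : 1 ≤ k) (hkm : k ≤ m) (v : Fin m → ℝ) (t : ℝ) :
    orderStat k v < t ↔ k ≤ #{j | v j < t} :=
  orderStat_mem_iff_le_card hk1 hkm v (isLowerSet_Iio t)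

theorem le_card_filter_le_orderStat (hk1 : 1 ≤ k) (hkm : k ≤ m) (v : Fin m → ℝ) :
    k ≤ #{j | v j ≤ orderStat k v} :=
  (orderStat_le_iff hk1 hkm v _).1 le_rfl

theorem measurable_orderStat (hk1 : 1 ≤ k) (hkm : k ≤ m) :
    Measurable (orderStat (m := m) k) := by
  refine measurable_of_Iio fun t => ?_
  have hcount : Measurable fun x : Fin m → ℝ => #{j | x j < t} := by
    simp only [card_filter]
    exact Finset.measurable_sum _ fun j _ =>
      Measurable.ite (measurableSet_lt (measurable_pi_apply j) measurable_const)
        measurable_const measurable_const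
  have hpre : orderStat k ⁻¹' Set.Iio t =
      (fun x : Fin m → ℝ => #{j | x j < t}) ⁻¹' {n | k ≤ n} :=
    Set.ext fun x => orderStat_lt_iff hk1 hkm x t
  rw [hpre]
  exact hcount MeasurableSet.of_discrete

end OrderStat

open Classical in
theorem mul_measure_univ_le_sum_measure {Ω ι : Type*} [MeasurableSpace Ω] [Fintype ι] (μ : Measure Ω)
    {A : ι → Set Ω} (hA : ∀ i, MeasurableSet (A i)) {k : ℕ} (hk : ∀ ω, k ≤ #{i | ω ∈ A i}) :
    k * μ Set.univ ≤ ∑ i, μ (A i) :=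
  calc k * μ Set.univ = ∫⁻ _, (k : ℝ≥0∞) ∂μ := by simp
    _ ≤ ∫⁻ ω, ∑ i, (A i).indicator 1 ω ∂μ := lintegral_mono fun ω => by
        simp only [Set.indicator_apply, Pi.one_apply, Finset.sum_boole]
        exact_mod_cast hk ω
    _ = ∑ i, μ (A i) := by
        rw [lintegral_finsetSum _ fun i _ => measurable_one.indicator (hA i)]
        simp_rw [lintegral_indicator_one (hA _)]

theorem Exchangeable.measure_comp_perm {Ω α : Type*} [MeasurableSpace Ω] [MeasurableSpace α]
    {P : Measure Ω} {m : ℕ} {Z : Fin m → Ω → α} (hexch : Exchangeable P Z)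
    (hZ : ∀ i, Measurable (Z i)) (σ : Equiv.Perm (Fin m)) {s : Set (Fin m → α)}
    (hs : MeasurableSet s) :
    P {ω | (fun i => Z (σ i) ω) ∈ s} = P {ω | (fun i => Z i ω) ∈ s} := by
  have h := congrArg (· s) (hexch σ)
  rwa [Measure.map_apply (measurable_pi_lambda _ fun i => hZ (σ i)) hs,
    Measure.map_apply (measurable_pi_lambda _ hZ) hs] at h

theorem Exchangeable.measure_le_orderStat_eq {Ω : Type*} [MeasurableSpace Ω] {P : Measure Ω}
    {m : ℕ} {V : Fin m → Ω → ℝ} (hexch : Exchangeable P V) (hV : ∀ i, Measurable (V i))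
    {k : ℕ} (hk1 : 1 ≤ k) (hkm : k ≤ m) (i j : Fin m) :
    P {ω | V i ω ≤ orderStat k (fun l => V l ω)} =
      P {ω | V j ω ≤ orderStat k (fun l => V l ω)} := by
  refine (congrArg P ?_).trans (hexch.measure_comp_perm hV (Equiv.swap j i)
    (measurableSet_le (measurable_pi_apply j) (measurable_orderStat hk1 hkm)))
  ext ω
  change _ ↔ V (Equiv.swap j i j) ω ≤ orderStat k ((fun l => V l ω) ∘ Equiv.swap j i)
  rw [orderStat_comp_perm, Equiv.swap_apply_left]
  rfl

/-- For exchangeable real random variables `V 1, …, V m` and `1 ≤ k ≤ m`, the last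
variable is at most the `k`-th order statistic with probability at least `k/m`. -/
theorem prob_le_orderStat
    {Ω : Type*} [MeasurableSpace Ω] (P : Measure Ω) [IsProbabilityMeasure P]
    {m : ℕ} (V : Fin m → Ω → ℝ) (hVmeas : ∀ i, Measurable (V i))
    (hexch : Exchangeable P V)
    (k : ℕ) (hk1 : 1 ≤ k) (hkm : k ≤ m) :
    ENNReal.ofReal ((k : ℝ) / (m : ℝ)) ≤
      P {ω | V ⟨m - 1, by omega⟩ ω ≤ orderStat k (fun i => V i ω)} := by
  set A : Fin m → Set Ω := fun i => {ω | V i ω ≤ orderStat k (fun l => V l ω)}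
  have hA : ∀ i, MeasurableSet (A i) := fun i => measurableSet_le (hVmeas i)
    ((measurable_orderStat hk1 hkm).comp (measurable_pi_lambda _ hVmeas))
  have hsum : (k : ℝ≥0∞) ≤ m * P (A ⟨m - 1, by omega⟩) := by
    simpa [A, hexch.measure_le_orderStat_eq hVmeas hk1 hkm _ ⟨m - 1, by omega⟩] using
      mul_measure_univ_le_sum_measure P hA fun ω => le_card_filter_le_orderStat hk1 hkm _
  have hm : (0 : ℝ) < m := by exact_mod_cast (by omega : 0 < m)
  rw [ENNReal.ofReal_div_of_pos hm, ofReal_natCast, ofReal_natCast,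
    ENNReal.div_le_iff (by simp; omega) (natCast_ne_top m), mul_comm]
  exact hsum
end

section
/- Let X_{n+1} be a random element of a measurable space 𝒳, let F, F_1, …, F_l : 𝒳 → 𝒴 be measurable functions with F_l = F, and let I(x) := { k ∈ {1, …, l−1} : F_k(x) ≠ F(x) } be the index set of inconsistent layers. Suppose C ⊆ {1, …, l−1} is a random index set (measurable in the underlying randomness, possibly depending on X_{n+1} and on auxiliary data) satisfying P( I(X_{n+1}) ⊆ C ) ≥ 1 − ε for some ε ∈ (0,1). Define K := min { j ∈ {1, …, l} : j ∉ C }, which is well-defined since l ∉ C. Then P( F_K(X_{n+1}) = F(X_{n+1}) ) ≥ 1 − ε. -/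
open MeasureTheory ProbabilityTheory

open scoped Classical in
/-- Early exiting at the first layer outside a conservative prediction `C` of the set of
inconsistent layers agrees with the full model with probability at least `1 - ε`.
Layers `1, …, l` are modeled as `Fin (L + 1)` (so `l = L + 1`), the full model is
`Fk (Fin.last L)`, and the early layers `1, …, l - 1` are the `k.castSucc` for
`k : Fin L`. -/
theorem early_exit_consistency
    {Ω 𝓧 𝓨 : Type*} [MeasurableSpace Ω] [MeasurableSpace 𝓧] [MeasurableSpace 𝓨]
    [MeasurableSingletonClass 𝓨]
    (P : Measure Ω) [IsProbabilityMeasure P]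
    (X : Ω → 𝓧) (hX : Measurable X)
    {L : ℕ} (Fk : Fin (L + 1) → 𝓧 → 𝓨) (hFk : ∀ k, Measurable (Fk k))
    (C : Ω → Finset (Fin L)) (hC : ∀ k, MeasurableSet {ω | k ∈ C ω})
    (ε : ℝ) (hε : ε ∈ Set.Ioo (0 : ℝ) 1)
    (hcov : ENNReal.ofReal (1 - ε) ≤
      P {ω | ∀ k : Fin L,
        Fk k.castSucc (X ω) ≠ Fk (Fin.last L) (X ω) → k ∈ C ω}) :
    ENNReal.ofReal (1 - ε) ≤
      P {ω |
        Fk ((Finset.univ.filter fun j : Fin (L + 1) =>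
              ∀ h : j ≠ Fin.last L, j.castPred h ∉ C ω).min'
            ⟨Fin.last L, by simp⟩) (X ω) = Fk (Fin.last L) (X ω)} := by
  refine hcov.trans (measure_mono fun ω h => ?_)
  simp only [Set.mem_setOf_eq] at h ⊢
  set S := Finset.univ.filter fun j : Fin (L + 1) =>
      ∀ h : j ≠ Fin.last L, j.castPred h ∉ C ω with hS
  have hKmem := (Finset.mem_filter.mp (S.min'_mem ⟨Fin.last L, by simp [hS]⟩)).2
  set K := S.min' ⟨Fin.last L, by simp [hS]⟩
  by_cases hlast : K = Fin.last L
  · rw [hlast]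
  · by_contra hne
    have := h (K.castPred hlast) (by rwa [Fin.castSucc_castPred])
    exact hKmem hlast this
end
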